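/- For every integer N ≥ 1 there exists a constant K_N > 0 such that every nonempty bounded open convex set Ω ⊆ ℝ^N satisfies K_N · ρ(Ω)^{N−1} · diam(Ω) ≤ |Ω|. -/

import Mathlib

open MeasureTheory Metric Set Filter Topology Bornology

noncomputable section

/-- Test functions for the variational definitions: smooth, compactly supported,
with (closed) support contained in `Ω`. -/
def TestFun {N : ℕ} (Ω : Set (EuclideanSpace ℝ (Fin N)))
    (u : EuclideanSpace ℝ (Fin N) → ℝ) : Prop :=
  ContDiff ℝ (⊤ : ℕ∞) u ∧ HasCompactSupport u ∧ tsupport u ⊆ Ω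

/-- The first Dirichlet eigenvalue of `Ω`, defined as the infimum of Rayleigh quotients. -/
def lam1 {N : ℕ} (Ω : Set (EuclideanSpace ℝ (Fin N))) : ℝ :=
  sInf { r : ℝ | ∃ u, TestFun Ω u ∧ u ≠ 0 ∧
    r = (∫ x, ‖fderiv ℝ u x‖ ^ 2) / (∫ x, (u x) ^ 2) }

/-- The torsional rigidity of `Ω`. -/
def torsion {N : ℕ} (Ω : Set (EuclideanSpace ℝ (Fin N))) : ℝ :=
  sSup { r : ℝ | ∃ u, TestFun Ω u ∧ (∫ x, ‖fderiv ℝ u x‖ ^ 2) ≠ 0 ∧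
    r = (∫ x, u x) ^ 2 / (∫ x, ‖fderiv ℝ u x‖ ^ 2) }

/-- Nonempty bounded open subset of `ℝ^N`. -/
def GoodSet {N : ℕ} (Ω : Set (EuclideanSpace ℝ (Fin N))) : Prop :=
  Ω.Nonempty ∧ IsOpen Ω ∧ IsBounded Ω

/-- An open Euclidean ball in `ℝ^N` of unit volume. -/
def unitBall (N : ℕ) : Set (EuclideanSpace ℝ (Fin N)) :=
  Metric.ball 0 ((volume (Metric.ball (0 : EuclideanSpace ℝ (Fin N)) 1)).toReal ^ (-(1:ℝ)/(N:ℝ)))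

/-- The inradius of a set: the supremum of radii of open balls contained in it. -/
def inradius {N : ℕ} (Ω : Set (EuclideanSpace ℝ (Fin N))) : ℝ :=
  sSup { r : ℝ | ∃ c : EuclideanSpace ℝ (Fin N), Metric.ball c r ⊆ Ω }

private lemma core (N : ℕ) (hN : 1 ≤ N) (Ω : Set (EuclideanSpace ℝ (Fin N)))
    (hb : IsBounded Ω) (hconv : Convex ℝ Ω) (c x : EuclideanSpace ℝ (Fin N))
    (r : ℝ) (hr : 0 < r) (hball : Metric.ball c r ⊆ Ω) (hx : x ∈ Ω) :
    (volume (Metric.ball (0 : EuclideanSpace ℝ (Fin N)) 1)).toReal / 2 ^ (N + 1)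
      * r ^ (N - 1) * dist x c ≤ (volume Ω).toReal := by
  haveI : Nontrivial (EuclideanSpace ℝ (Fin N)) :=
    Module.nontrivial_of_finrank_pos (by rw [finrank_euclideanSpace_fin]; omega)
  set ω : ℝ := (volume (Metric.ball (0 : EuclideanSpace ℝ (Fin N)) 1)).toReal with hω_def
  have hω : 0 < ω := ENNReal.toReal_pos (measure_ball_pos volume 0 one_pos).ne'
    measure_ball_lt_top.ne
  have hV : 0 ≤ (volume Ω).toReal := ENNReal.toReal_nonneg
  set h : ℝ := dist x c with hh_def
  rcases eq_or_lt_of_le (dist_nonneg : 0 ≤ h) with h0 | hpos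
  · have hz : h = 0 := h0.symm
    rw [hz, mul_zero]; exact hV
  set n : ℕ := ⌊h / (2 * r)⌋₊ + 1 with hn_def
  set p : ℕ → EuclideanSpace ℝ (Fin N) := fun j => c + (((j : ℝ) * r) / h) • (x - c) with hp_def
  -- each ball is inside Ω
  have hsj : ∀ j < n, 0 ≤ ((j:ℝ) * r) / h ∧ ((j:ℝ) * r) / h ≤ 1/2 := by
    intro j hj
    have hj' : (j : ℝ) ≤ h / (2 * r) := by
      have : j ≤ ⌊h / (2 * r)⌋₊ := by omega
      exact (Nat.le_floor_iff (by positivity)).1 this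
    constructor
    · positivity
    · rw [div_le_iff₀ hpos]
      have := mul_le_mul_of_nonneg_right hj' (le_of_lt hr)
      rw [div_mul_eq_mul_div, le_div_iff₀ (by positivity)] at this
      nlinarith
  have hsub : ∀ j < n, Metric.ball (p j) (r / 2) ⊆ Ω := by
    intro j hj y hy
    obtain ⟨hs0, hs2⟩ := hsj j hj
    set s : ℝ := ((j:ℝ) * r) / h with hs_def
    have h1s : (1:ℝ)/2 ≤ 1 - s := by linarith
    have h1s0 : (1 - s) ≠ 0 := by linarith
    have hv : ‖y - p j‖ < r / 2 := by
      rw [← dist_eq_norm]; exact hy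
    have ha : c + (1 - s)⁻¹ • (y - p j) ∈ Metric.ball c r := by
      rw [Metric.mem_ball, dist_eq_norm]
      have : c + (1 - s)⁻¹ • (y - p j) - c = (1 - s)⁻¹ • (y - p j) := by abel
      rw [this, norm_smul, Real.norm_eq_abs, abs_of_pos (by positivity : (0:ℝ) < (1-s)⁻¹)]
      have hinv : (1 - s)⁻¹ ≤ 2 := by
        rw [inv_le_comm₀ (by linarith) (by norm_num)]
        linarith
      calc (1 - s)⁻¹ * ‖y - p j‖ ≤ 2 * ‖y - p j‖ := by nlinarith [norm_nonneg (y - p j)]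
        _ < 2 * (r / 2) := by linarith
        _ = r := by ring
    have hy' : y = (1 - s) • (c + (1 - s)⁻¹ • (y - p j)) + s • x := by
      rw [smul_add, smul_inv_smul₀ h1s0, hp_def]
      simp only [← hs_def]
      module
    rw [hy']
    exact hconv (hball ha) hx (by linarith) hs0 (by ring)
  -- disjointness
  have hdisj : (↑(Finset.range n) : Set ℕ).PairwiseDisjoint
      (fun j => Metric.ball (p j) (r / 2)) := by
    intro i _ j _ hij
    apply ball_disjoint_ball
    have : dist (p i) (p j) = |(i:ℝ) - (j:ℝ)| * r := by
      rw [dist_eq_norm]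
      have : p i - p j = (((i:ℝ) * r) / h - ((j:ℝ) * r) / h) • (x - c) := by
        simp only [hp_def]; module
      rw [this, norm_smul, Real.norm_eq_abs, ← dist_eq_norm, ← hh_def]
      have : ((i:ℝ) * r) / h - ((j:ℝ) * r) / h = ((i:ℝ) - (j:ℝ)) * (r / h) := by ring
      rw [this, abs_mul, abs_of_pos (by positivity : (0:ℝ) < r / h)]
      field_simp
      exact mul_div_cancel_right₀ _ (hpos.ne' : h ≠ 0)
    rw [this]
    have hone : (1:ℝ) ≤ |(i:ℝ) - (j:ℝ)| := by
      have : ((i:ℤ) - (j:ℤ)) ≠ 0 := by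
        simp only [sub_ne_zero]; exact_mod_cast hij
      have := Int.one_le_abs this
      have h2 : (1:ℝ) ≤ |((i:ℤ) - (j:ℤ) : ℤ)| := by exact_mod_cast this
      rwa [Int.cast_abs, Int.cast_sub, Int.cast_natCast, Int.cast_natCast] at h2
    nlinarith
  -- volume computation
  have hvol_ball : volume (Metric.ball (0 : EuclideanSpace ℝ (Fin N)) (r/2))
      = ENNReal.ofReal ((r/2) ^ N) * volume (Metric.ball (0 : EuclideanSpace ℝ (Fin N)) 1) := by
    rw [Measure.addHaar_ball volume 0 (by positivity : (0:ℝ) ≤ r/2), finrank_euclideanSpace_fin]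
  have hle : (n : ENNReal) * volume (Metric.ball (0 : EuclideanSpace ℝ (Fin N)) (r/2)) ≤ volume Ω := by
    have hU : (⋃ j ∈ Finset.range n, Metric.ball (p j) (r/2)) ⊆ Ω := by
      simp only [iUnion_subset_iff]
      intro j hj
      exact hsub j (Finset.mem_range.1 hj)
    calc (n : ENNReal) * volume (Metric.ball (0 : EuclideanSpace ℝ (Fin N)) (r/2))
        = ∑ j ∈ Finset.range n, volume (Metric.ball (p j) (r/2)) := by
          rw [Finset.sum_congr rfl (fun j _ => Measure.addHaar_ball_center volume (p j) (r/2)),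
            Finset.sum_const, Finset.card_range, nsmul_eq_mul]
      _ = volume (⋃ j ∈ Finset.range n, Metric.ball (p j) (r/2)) :=
          (measure_biUnion_finset hdisj (fun j _ => measurableSet_ball)).symm
      _ ≤ volume Ω := measure_mono hU
  have hfin : volume Ω ≠ ⊤ := hb.measure_lt_top.ne
  have hreal : (n : ℝ) * ((r/2) ^ N * ω) ≤ (volume Ω).toReal := by
    have := ENNReal.toReal_mono hfin hle
    rw [ENNReal.toReal_mul, hvol_ball, ENNReal.toReal_mul,
      ENNReal.toReal_ofReal (by positivity)] at this
    simpa using this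
  have hn_ge : h / (2 * r) ≤ (n : ℝ) := by
    rw [hn_def]
    push_cast
    exact le_of_lt (Nat.lt_floor_add_one _)
  have hrpow : r ^ N = r ^ (N - 1) * r := by
    conv_lhs => rw [← Nat.sub_add_cancel hN]
    rw [pow_succ]
  calc ω / 2 ^ (N + 1) * r ^ (N - 1) * h
      = (h / (2 * r)) * ((r/2) ^ N * ω) := by
        rw [div_pow, hrpow]
        field_simp
        ring
    _ ≤ (n : ℝ) * ((r/2) ^ N * ω) := by
        apply mul_le_mul_of_nonneg_right hn_ge (by positivity)
    _ ≤ (volume Ω).toReal := hreal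

theorem statement_1 (N : ℕ) (hN : 1 ≤ N) :
    ∃ K : ℝ, 0 < K ∧ ∀ Ω : Set (EuclideanSpace ℝ (Fin N)),
      GoodSet Ω → Convex ℝ Ω →
      K * inradius Ω ^ (N - 1) * Metric.diam Ω ≤ (volume Ω).toReal := by
  haveI : Nontrivial (EuclideanSpace ℝ (Fin N)) :=
    Module.nontrivial_of_finrank_pos (by rw [finrank_euclideanSpace_fin]; omega)
  set ω : ℝ := (volume (Metric.ball (0 : EuclideanSpace ℝ (Fin N)) 1)).toReal with hω_def
  have hω : 0 < ω := ENNReal.toReal_pos (measure_ball_pos volume 0 one_pos).ne'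
    measure_ball_lt_top.ne
  refine ⟨ω / 2 ^ (N + 2), by positivity, ?_⟩
  rintro Ω ⟨hne, hopen, hbd⟩ hconv
  set S : Set ℝ := { r : ℝ | ∃ c : EuclideanSpace ℝ (Fin N), Metric.ball c r ⊆ Ω }
    with hS_def
  have hinr : inradius Ω = sSup S := rfl
  have hV : 0 ≤ (volume Ω).toReal := ENNReal.toReal_nonneg
  have hD0 : 0 ≤ Metric.diam Ω := Metric.diam_nonneg
  -- bounded above
  have hbdd : BddAbove S := by
    refine ⟨2 * Metric.diam Ω, ?_⟩
    rintro r ⟨c, hball⟩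
    rcases le_or_gt r 0 with h0 | h0
    · linarith
    · have hc : c ∈ Ω := hball (by simp [Metric.mem_ball, h0])
      set e : EuclideanSpace ℝ (Fin N) := EuclideanSpace.single (⟨0, by omega⟩ : Fin N) (1:ℝ)
        with he_def
      have hne' : ‖e‖ = 1 := by rw [he_def, EuclideanSpace.norm_single]; simp
      have hp : c + (r/2) • e ∈ Metric.ball c r := by
        rw [Metric.mem_ball, dist_eq_norm]
        have : c + (r/2) • e - c = (r/2) • e := by abel
        rw [this, norm_smul, Real.norm_eq_abs, hne', abs_of_pos (by linarith)]
        linarith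
      have := Metric.dist_le_diam_of_mem hbd (hball hp) hc
      rw [dist_eq_norm] at this
      have h2 : c + (r/2) • e - c = (r/2) • e := by abel
      rw [h2, norm_smul, Real.norm_eq_abs, hne', abs_of_pos (by linarith)] at this
      linarith
  -- positive inradius
  obtain ⟨c₀, hc₀⟩ := hne
  obtain ⟨ε, hε, hball₀⟩ := Metric.isOpen_iff.1 hopen c₀ hc₀
  have hρpos : 0 < inradius Ω := by
    rw [hinr]
    exact lt_of_lt_of_le hε (le_csSup hbdd ⟨c₀, hball₀⟩)
  have hSne : S.Nonempty := ⟨ε, c₀, hball₀⟩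
  -- main step for each admissible radius
  have star : ∀ r ∈ S, 0 < r →
      ω / 2 ^ (N + 2) * r ^ (N - 1) * Metric.diam Ω ≤ (volume Ω).toReal := by
    rintro r ⟨c, hball⟩ hrpos
    have hApos : 0 < ω / 2 ^ (N + 1) * r ^ (N - 1) := by positivity
    have key : ∀ z ∈ Ω, dist z c ≤ (volume Ω).toReal / (ω / 2 ^ (N + 1) * r ^ (N - 1)) := by
      intro z hz
      have h2 := core N hN Ω hbd hconv c z r hrpos hball hz
      rw [le_div_iff₀ hApos]
      nlinarith
    have hdiam : Metric.diam Ω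
        ≤ 2 * ((volume Ω).toReal / (ω / 2 ^ (N + 1) * r ^ (N - 1))) := by
      apply Metric.diam_le_of_forall_dist_le (by positivity)
      intro a ha b hb
      calc dist a b ≤ dist a c + dist b c := dist_triangle_right a b c
        _ ≤ _ + _ := add_le_add (key a ha) (key b hb)
        _ = 2 * ((volume Ω).toReal / (ω / 2 ^ (N + 1) * r ^ (N - 1))) := by ring
    have hA2 : ω / 2 ^ (N + 2) * r ^ (N - 1) = (ω / 2 ^ (N + 1) * r ^ (N - 1)) / 2 := by
      rw [pow_succ]; ring
    rw [hA2]
    calc (ω / 2 ^ (N + 1) * r ^ (N - 1)) / 2 * Metric.diam Ω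
        ≤ (ω / 2 ^ (N + 1) * r ^ (N - 1)) / 2
          * (2 * ((volume Ω).toReal / (ω / 2 ^ (N + 1) * r ^ (N - 1)))) := by
          apply mul_le_mul_of_nonneg_left hdiam (by positivity)
      _ = (volume Ω).toReal := by field_simp
  -- all radii below the inradius
  have hIoo : ∀ t ∈ Set.Ioo (0:ℝ) (inradius Ω),
      ω / 2 ^ (N + 2) * t ^ (N - 1) * Metric.diam Ω ≤ (volume Ω).toReal := by
    rintro t ⟨ht0, htρ⟩
    rw [hinr] at htρ
    obtain ⟨r, hrS, htr⟩ := exists_lt_of_lt_csSup hSne htρ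
    have h1 := star r hrS (ht0.trans htr)
    have h2 : t ^ (N - 1) ≤ r ^ (N - 1) := pow_le_pow_left₀ ht0.le htr.le _
    have h3 : ω / 2 ^ (N + 2) * t ^ (N - 1) * Metric.diam Ω
        ≤ ω / 2 ^ (N + 2) * r ^ (N - 1) * Metric.diam Ω := by
      apply mul_le_mul_of_nonneg_right _ hD0
      exact mul_le_mul_of_nonneg_left h2 (by positivity)
    linarith
  -- pass to the limit
  have hcont : Filter.Tendsto (fun t : ℝ => ω / 2 ^ (N + 2) * t ^ (N - 1) * Metric.diam Ω)
      (nhdsWithin (inradius Ω) (Set.Iio (inradius Ω)))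
      (nhds (ω / 2 ^ (N + 2) * inradius Ω ^ (N - 1) * Metric.diam Ω)) := by
    apply Filter.Tendsto.mono_left _ nhdsWithin_le_nhds
    exact Continuous.tendsto (by continuity) _
  exact le_of_tendsto hcont (Filter.eventually_of_mem (Ioo_mem_nhdsLT hρpos) hIoo)
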